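/- arXiv:2102.05283 — 6 statements merged into one kernel-verified Lean document; each statement's English description precedes it below -/
import Mathlib

section
/- There is no fixed point (x,y,u,v) of W in S^{2,2} with x ≠ 0 and v ≠ 0; equivalently, the set of fixed points of W equals F11 ∪ F12 where F11 = {(0,a,u,v) : u+v = b, u,v ∈ [0,b]} and F12 = {(x,y,b,0) : x+y = a, x,y ∈ [0,a]}. -/
/-! At a fixed point with `x, v > 0`, the second and third coordinate equations read
`s₁ x v = y (u + v) (x + y - a)` and `s₂ x v = u (x + y) (u + v - b)`, which force `x + y > a`
and `u + v > b`, contradicting `x + y + u + v = 1 = a + b`. Otherwise `x = 0` and the second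
equation gives `y = a`, or `v = 0` and the third gives `u = b`. -/

noncomputable def W (a b s1 s2 : ℝ) (p : ℝ × ℝ × ℝ × ℝ) : ℝ × ℝ × ℝ × ℝ :=
  (a * p.1 * p.2.2.1 / ((p.1 + p.2.1) * (p.2.2.1 + p.2.2.2)),
   (s1 * p.1 * p.2.2.2 + a * p.2.1 * p.2.2.1 + a * p.2.1 * p.2.2.2) /
     ((p.1 + p.2.1) * (p.2.2.1 + p.2.2.2)),
   (s2 * p.1 * p.2.2.2 + b * p.1 * p.2.2.1 + b * p.2.1 * p.2.2.1) /
     ((p.1 + p.2.1) * (p.2.2.1 + p.2.2.2)),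
   b * p.2.1 * p.2.2.2 / ((p.1 + p.2.1) * (p.2.2.1 + p.2.2.2)))

def S22 : Set (ℝ × ℝ × ℝ × ℝ) :=
  {p | 0 ≤ p.1 ∧ 0 ≤ p.2.1 ∧ 0 ≤ p.2.2.1 ∧ 0 ≤ p.2.2.2 ∧
    p.1 + p.2.1 + p.2.2.1 + p.2.2.2 = 1 ∧
    (p.1, p.2.1) ≠ ((0 : ℝ), (0 : ℝ)) ∧ (p.2.2.1, p.2.2.2) ≠ ((0 : ℝ), (0 : ℝ))}

lemma add_pos_of_nonneg_of_ne_zero {x y : ℝ} (hx : 0 ≤ x) (hy : 0 ≤ y) (h : (x, y) ≠ (0, 0)) :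
    0 < x + y := by
  refine (add_nonneg hx hy).lt_of_ne' fun hxy => h ?_
  rw [Prod.mk.injEq]
  constructor <;> linarith

namespace W

variable {a b s1 s2 x y u v : ℝ}

theorem mk_eq_self_iff (hxy : x + y ≠ 0) (huv : u + v ≠ 0) :
    W a b s1 s2 (x, y, u, v) = (x, y, u, v) ↔
      a * x * u = x * ((x + y) * (u + v)) ∧
      s1 * x * v + a * y * u + a * y * v = y * ((x + y) * (u + v)) ∧
      s2 * x * v + b * x * u + b * y * u = u * ((x + y) * (u + v)) ∧
      b * y * v = v * ((x + y) * (u + v)) := by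
  simp only [W, Prod.mk.injEq, div_eq_iff (mul_ne_zero hxy huv)]

theorem not_mk_eq_self_of_pos (hs1 : 0 < s1) (hs2 : 0 < s2) (hab : a + b = 1)
    (hx : 0 < x) (hy : 0 ≤ y) (hu : 0 ≤ u) (hv : 0 < v) (hsum : x + y + u + v = 1) :
    W a b s1 s2 (x, y, u, v) ≠ (x, y, u, v) := by
  intro hfix
  obtain ⟨-, h2, h3, -⟩ := (mk_eq_self_iff (by positivity) (by positivity)).1 hfix
  have hxv : 0 < x * v := mul_pos hx hv
  have hxy_gt : a < x + y := by
    have key : s1 * (x * v) = y * (u + v) * (x + y - a) := by linear_combination h2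
    exact sub_pos.1 (pos_of_mul_pos_right (key ▸ mul_pos hs1 hxv) (by positivity))
  have huv_gt : b < u + v := by
    have key : s2 * (x * v) = u * (x + y) * (u + v - b) := by linear_combination h3
    exact sub_pos.1 (pos_of_mul_pos_right (key ▸ mul_pos hs2 hxv) (by positivity))
  linarith

theorem mk_eq_self_iff_of_nonneg (hs1 : 0 < s1) (hs2 : 0 < s2) (hab : a + b = 1)
    (hx : 0 ≤ x) (hy : 0 ≤ y) (hu : 0 ≤ u) (hv : 0 ≤ v) (hsum : x + y + u + v = 1)
    (hxy : 0 < x + y) (huv : 0 < u + v) :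
    W a b s1 s2 (x, y, u, v) = (x, y, u, v) ↔
      (x = 0 ∧ y = a ∧ u + v = b) ∨ (u = b ∧ v = 0 ∧ x + y = a) := by
  constructor
  · intro hfix
    obtain ⟨-, h2, h3, -⟩ := (mk_eq_self_iff hxy.ne' huv.ne').1 hfix
    rcases hx.eq_or_lt with rfl | hx
    · have hya : y * (u + v) * y = y * (u + v) * a := by linear_combination -h2
      have hy_eq : y = a := mul_left_cancel₀ (mul_pos (by linarith) huv).ne' hya
      exact Or.inl ⟨rfl, hy_eq, by linarith⟩
    rcases hv.eq_or_lt with rfl | hv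
    · have hub : (x + y) * u * u = (x + y) * u * b := by linear_combination -h3
      have hu_eq : u = b := mul_left_cancel₀ (mul_pos hxy (by linarith)).ne' hub
      exact Or.inr ⟨hu_eq, rfl, by linarith⟩
    exact absurd hfix (not_mk_eq_self_of_pos hs1 hs2 hab hx hy hu hv hsum)
  · rw [mk_eq_self_iff hxy.ne' huv.ne']
    rintro (⟨rfl, rfl, rfl⟩ | ⟨rfl, rfl, rfl⟩) <;> refine ⟨?_, ?_, ?_, ?_⟩ <;> ring

end W

theorem stmt2_general (a b s1 s2 : ℝ) (hs1 : 0 < s1) (hs2 : 0 < s2)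
    (hab : a + b = 1)
    (p : ℝ × ℝ × ℝ × ℝ) (hp : p ∈ S22) :
    W a b s1 s2 p = p ↔
      ((p.1 = 0 ∧ p.2.1 = a ∧ p.2.2.1 + p.2.2.2 = b ∧
         p.2.2.1 ∈ Set.Icc (0 : ℝ) b ∧ p.2.2.2 ∈ Set.Icc (0 : ℝ) b) ∨
       (p.2.2.1 = b ∧ p.2.2.2 = 0 ∧ p.1 + p.2.1 = a ∧
         p.1 ∈ Set.Icc (0 : ℝ) a ∧ p.2.1 ∈ Set.Icc (0 : ℝ) a)) := by
  obtain ⟨x, y, u, v⟩ := p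
  obtain ⟨hx, hy, hu, hv, hsum, hxy, huv⟩ := hp
  dsimp only at *
  rw [W.mk_eq_self_iff_of_nonneg hs1 hs2 hab hx hy hu hv hsum
    (add_pos_of_nonneg_of_ne_zero hx hy hxy) (add_pos_of_nonneg_of_ne_zero hu hv huv)]
  constructor
  · rintro (⟨h1, h2, h3⟩ | ⟨h1, h2, h3⟩)
    · exact Or.inl ⟨h1, h2, h3, ⟨hu, by linarith⟩, ⟨hv, by linarith⟩⟩
    · exact Or.inr ⟨h1, h2, h3, ⟨hx, by linarith⟩, ⟨hy, by linarith⟩⟩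
  · rintro (⟨h1, h2, h3, -⟩ | ⟨h1, h2, h3, -⟩)
    · exact Or.inl ⟨h1, h2, h3⟩
    · exact Or.inr ⟨h1, h2, h3⟩

theorem stmt2 (a b s1 s2 : ℝ) (ha : 0 < a) (hb : 0 < b) (hs1 : 0 < s1) (hs2 : 0 < s2)
    (hab : a + b = 1) (hs : s1 + s2 = 1)
    (p : ℝ × ℝ × ℝ × ℝ) (hp : p ∈ S22) :
    W a b s1 s2 p = p ↔
      ((p.1 = 0 ∧ p.2.1 = a ∧ p.2.2.1 + p.2.2.2 = b ∧
         p.2.2.1 ∈ Set.Icc (0 : ℝ) b ∧ p.2.2.2 ∈ Set.Icc (0 : ℝ) b) ∨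
       (p.2.2.1 = b ∧ p.2.2.2 = 0 ∧ p.1 + p.2.1 = a ∧
         p.1 ∈ Set.Icc (0 : ℝ) a ∧ p.2.1 ∈ Set.Icc (0 : ℝ) a)) :=
  stmt2_general a b s1 s2 hs1 hs2 hab p hp
end

section
/- For any (α,β) ∈ [0,1]², the sequence of products α^(m)·β^(m) of the coordinates of the iterates V^m(α,β) converges to 0 as m → ∞. -/
/-! The product `t = αβ` satisfies `t' (1 + √t)² ≤ t` along the orbit: the numerator
`(1-α)(1-β)` is at most `(1-√t)²` by AM-GM, while each denominator is at least `1 - t`, and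
`(1-t)² = (1-√t)²(1+√t)²`. Hence `t` decreases to a limit `L` with `L (1 + √L)² ≤ L`,
which forces `L = 0`. -/

noncomputable def V (p1 p2 : ℝ) (q : ℝ × ℝ) : ℝ × ℝ :=
  (q.1 * (1 - q.2) / (1 + (p1 - 1) * q.1 * q.2),
   q.2 * (1 - q.1) / (1 + (p2 - 1) * q.1 * q.2))

open Filter Topology Set

lemma one_sub_mul_le_one_add_mul {p α β : ℝ} (hp : 0 < p) (hα : 0 ≤ α) (hβ : 0 ≤ β) :
    1 - α * β ≤ 1 + (p - 1) * α * β := by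
  nlinarith [mul_nonneg (mul_nonneg hp.le hα) hβ]

lemma one_add_mul_pos {p α β : ℝ} (hp : 0 < p) (hα : 0 ≤ α) (hα1 : α ≤ 1)
    (hβ : 0 ≤ β) (hβ1 : β ≤ 1) : 0 < 1 + (p - 1) * α * β := by
  rcases (mul_nonneg hα hβ).eq_or_lt with h | h
  · nlinarith
  · nlinarith [mul_pos hp h, mul_le_one₀ hα1 hβ hβ1]

lemma V_mapsTo {p1 p2 : ℝ} (hp1 : 0 < p1) (hp2 : 0 < p2) :
    MapsTo (V p1 p2) (Icc 0 1 ×ˢ Icc 0 1) (Icc 0 1 ×ˢ Icc 0 1) := by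
  rintro ⟨α, β⟩ ⟨⟨hα, hα1⟩, hβ, hβ1⟩
  have hD1 := one_add_mul_pos hp1 hα hα1 hβ hβ1
  have hD2 := one_add_mul_pos hp2 hα hα1 hβ hβ1
  refine ⟨⟨div_nonneg (by nlinarith) hD1.le, ?_⟩, div_nonneg (by nlinarith) hD2.le, ?_⟩
  · rw [V, div_le_one hD1]
    nlinarith [one_sub_mul_le_one_add_mul hp1 hα hβ]
  · rw [V, div_le_one hD2]
    nlinarith [one_sub_mul_le_one_add_mul hp2 hα hβ]

lemma one_sub_mul_one_sub_mul_sq_le {α β : ℝ} (hα : 0 ≤ α) (hβ : 0 ≤ β) :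
    (1 - α) * (1 - β) * (1 + √(α * β)) ^ 2 ≤ (1 - α * β) ^ 2 := by
  set s := √(α * β) with hs
  have hs2 : s ^ 2 = α * β := Real.sq_sqrt (mul_nonneg hα hβ)
  have amgm : 2 * s ≤ α + β := by
    have h := two_mul_le_add_sq √α √β
    rw [Real.sq_sqrt hα, Real.sq_sqrt hβ] at h
    rw [hs, Real.sqrt_mul hα]
    linarith
  have hnum : (1 - α) * (1 - β) ≤ (1 - s) ^ 2 := by nlinarith
  calc (1 - α) * (1 - β) * (1 + s) ^ 2 ≤ (1 - s) ^ 2 * (1 + s) ^ 2 := by gcongr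
    _ = (1 - α * β) ^ 2 := by rw [← hs2]; ring

lemma V_fst_mul_snd_mul_sq_le {p1 p2 : ℝ} (hp1 : 0 < p1) (hp2 : 0 < p2) {q : ℝ × ℝ}
    (hq : q ∈ Icc (0 : ℝ) 1 ×ˢ Icc (0 : ℝ) 1) :
    (V p1 p2 q).1 * (V p1 p2 q).2 * (1 + √(q.1 * q.2)) ^ 2 ≤ q.1 * q.2 := by
  obtain ⟨α, β⟩ := q
  obtain ⟨⟨hα, hα1⟩, hβ, hβ1⟩ := hq
  have hD1 := one_add_mul_pos hp1 hα hα1 hβ hβ1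
  have hD2 := one_add_mul_pos hp2 hα hα1 hβ hβ1
  have hden : (1 - α * β) ^ 2 ≤ (1 + (p1 - 1) * α * β) * (1 + (p2 - 1) * α * β) := by
    rw [sq]
    have h1 : 0 ≤ 1 - α * β := by nlinarith [mul_le_one₀ hα1 hβ hβ1]
    exact mul_le_mul (one_sub_mul_le_one_add_mul hp1 hα hβ)
      (one_sub_mul_le_one_add_mul hp2 hα hβ) h1 hD1.le
  simp only [V]
  rw [div_mul_div_comm, div_mul_eq_mul_div, div_le_iff₀ (mul_pos hD1 hD2)]
  calc α * (1 - β) * (β * (1 - α)) * (1 + √(α * β)) ^ 2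
      = (α * β) * ((1 - α) * (1 - β) * (1 + √(α * β)) ^ 2) := by ring
    _ ≤ (α * β) * (1 - α * β) ^ 2 := by gcongr; exact one_sub_mul_one_sub_mul_sq_le hα hβ
    _ ≤ (α * β) * ((1 + (p1 - 1) * α * β) * (1 + (p2 - 1) * α * β)) := by gcongr

lemma tendsto_zero_of_mul_one_add_sqrt_sq_le {t : ℕ → ℝ} (ht0 : ∀ n, 0 ≤ t n)
    (hstep : ∀ n, t (n + 1) * (1 + √(t n)) ^ 2 ≤ t n) : Tendsto t atTop (𝓝 0) := by
  have hanti : Antitone t := antitone_nat_of_succ_le fun n => by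
    have h1 : 1 ≤ (1 + √(t n)) ^ 2 := by nlinarith [Real.sqrt_nonneg (t n)]
    nlinarith [hstep n, mul_le_mul_of_nonneg_left h1 (ht0 (n + 1))]
  have hL := tendsto_atTop_ciInf hanti ⟨0, by rintro _ ⟨n, rfl⟩; exact ht0 n⟩
  set L := ⨅ n, t n
  have hL0 : 0 ≤ L := ge_of_tendsto' hL ht0
  have hlim : L * (1 + √L) ^ 2 ≤ L := by
    refine le_of_tendsto_of_tendsto' ?_ hL hstep
    have hsqrt := (Real.continuous_sqrt.tendsto L).comp hL
    exact ((hL.comp (tendsto_add_atTop_nat 1)).mul ((tendsto_const_nhds.add hsqrt).pow 2))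
  have hL_eq : L = 0 := by
    by_contra hne
    have hpos : 0 < √L := Real.sqrt_pos.2 (hL0.lt_of_ne' hne)
    nlinarith [mul_pos (hL0.lt_of_ne' hne) hpos]
  rwa [hL_eq] at hL

theorem stmt10 (p1 p2 : ℝ) (hp1 : 0 < p1) (hp2 : 0 < p2)
    (q : ℝ × ℝ) (hq : q ∈ Set.Icc (0 : ℝ) 1 ×ˢ Set.Icc (0 : ℝ) 1) :
    Filter.Tendsto (fun m => ((V p1 p2)^[m] q).1 * ((V p1 p2)^[m] q).2)
      Filter.atTop (nhds 0) := by
  have hbox m : (V p1 p2)^[m] q ∈ Icc (0 : ℝ) 1 ×ˢ Icc (0 : ℝ) 1 :=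
    (V_mapsTo hp1 hp2).iterate m hq
  refine tendsto_zero_of_mul_one_add_sqrt_sq_le
    (fun m => mul_nonneg (hbox m).1.1 (hbox m).2.1) fun m => ?_
  simpa only [Function.iterate_succ_apply'] using V_fst_mul_snd_mul_sq_le hp1 hp2 (hbox m)
end

section
/- For any initial point in [0,1]², the iterates V^m converge to a fixed point of V, i.e., to a point on one of the coordinate axes. -/
open Set Filter Function Topology

theorem exists_tendsto_iterate_of_le_self {α β : Type*} [ConditionallyCompleteLattice α]
    [ConditionallyCompleteLattice β] [TopologicalSpace α] [TopologicalSpace β]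
    [InfConvergenceClass α] [InfConvergenceClass β] {f : α × β → α × β} {s : Set (α × β)}
    (hs : MapsTo f s s) (hle : ∀ x ∈ s, f x ≤ x) (hbdd : BddBelow s) {x : α × β} (hx : x ∈ s) :
    ∃ l, Tendsto (fun n => f^[n] x) atTop (𝓝 l) := by
  have hanti : Antitone fun n => f^[n] x := antitone_nat_of_succ_le fun n => by
    rw [iterate_succ_apply']
    exact hle _ (hs.iterate n hx)
  obtain ⟨hbdd₁, hbdd₂⟩ :=
    bddBelow_prod.1 (hbdd.mono (range_subset_iff.2 fun n => hs.iterate n hx))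
  have hne := range_nonempty fun n => f^[n] x
  exact ⟨_, tendsto_atTop_isGLB hanti (isGLB_prod (p := (_, _)).2
    ⟨isGLB_csInf (hne.image _) hbdd₁, isGLB_csInf (hne.image _) hbdd₂⟩)⟩

lemma one_add_sub_one_mul_pos {p t : ℝ} (hp : 0 < p) (ht : t ∈ Icc (0 : ℝ) 1) :
    0 < 1 + (p - 1) * t := by
  obtain ⟨ht0, ht1⟩ := ht
  nlinarith [mul_nonneg hp.le ht0, mul_nonneg hp.le (sub_nonneg.2 ht1)]

lemma one_add_sub_one_mul_mul_pos {p a b : ℝ} (hp : 0 < p) (ha : a ∈ Icc (0 : ℝ) 1)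
    (hb : b ∈ Icc (0 : ℝ) 1) : 0 < 1 + (p - 1) * a * b := by
  rw [mul_assoc]
  exact one_add_sub_one_mul_pos hp ⟨mul_nonneg ha.1 hb.1, mul_le_one₀ ha.2 hb.1 hb.2⟩

lemma mul_one_sub_div_mem_Icc {p a b : ℝ} (hp : 0 < p) (ha : a ∈ Icc (0 : ℝ) 1)
    (hb : b ∈ Icc (0 : ℝ) 1) : a * (1 - b) / (1 + (p - 1) * a * b) ∈ Icc 0 a := by
  have hD := one_add_sub_one_mul_mul_pos hp ha hb
  have hDa := one_add_sub_one_mul_pos hp ha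
  refine ⟨div_nonneg (mul_nonneg ha.1 (sub_nonneg.2 hb.2)) hD.le, ?_⟩
  rw [div_le_iff₀ hD]
  -- `a * (1 + (p - 1) * a * b) - a * (1 - b) = a * b * (1 + (p - 1) * a)`
  nlinarith [mul_nonneg (mul_nonneg ha.1 hb.1) hDa.le]

section

variable {p1 p2 : ℝ}

lemma V_mem_Icc_prod_Icc (hp1 : 0 < p1) (hp2 : 0 < p2) {q : ℝ × ℝ}
    (hq : q ∈ Icc (0 : ℝ) 1 ×ˢ Icc (0 : ℝ) 1) :
    V p1 p2 q ∈ Icc (0 : ℝ) 1 ×ˢ Icc (0 : ℝ) 1 ∧ V p1 p2 q ≤ q := by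
  have h1 := mul_one_sub_div_mem_Icc hp1 hq.1 hq.2
  have h2 := mul_one_sub_div_mem_Icc hp2 hq.2 hq.1
  rw [mul_right_comm] at h2
  exact ⟨⟨⟨h1.1, h1.2.trans hq.1.2⟩, h2.1, h2.2.trans hq.2.2⟩, h1.2, h2.2⟩

lemma continuousAt_V (hp1 : 0 < p1) (hp2 : 0 < p2) {q : ℝ × ℝ}
    (hq : q ∈ Icc (0 : ℝ) 1 ×ˢ Icc (0 : ℝ) 1) : ContinuousAt (V p1 p2) q := by
  have h1 := (one_add_sub_one_mul_mul_pos hp1 hq.1 hq.2).ne'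
  have h2 := (one_add_sub_one_mul_mul_pos hp2 hq.1 hq.2).ne'
  unfold V
  fun_prop (disch := assumption)

lemma V_fixed_fst_mul_snd_eq_zero (hp1 : 0 < p1) {q : ℝ × ℝ}
    (hq : q ∈ Icc (0 : ℝ) 1 ×ˢ Icc (0 : ℝ) 1) (hfix : V p1 p2 q = q) : q.1 * q.2 = 0 := by
  have hD := one_add_sub_one_mul_mul_pos hp1 hq.1 hq.2
  have h1 : q.1 * (1 - q.2) / (1 + (p1 - 1) * q.1 * q.2) = q.1 := congrArg Prod.fst hfix
  rw [div_eq_iff hD.ne'] at h1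
  have hkey : q.1 * q.2 * (1 + (p1 - 1) * q.1) = 0 := by linear_combination -h1
  exact (mul_eq_zero.1 hkey).resolve_right (one_add_sub_one_mul_pos hp1 hq.1).ne'

end

theorem stmt11 (p1 p2 : ℝ) (hp1 : 0 < p1) (hp2 : 0 < p2)
    (q : ℝ × ℝ) (hq : q ∈ Set.Icc (0 : ℝ) 1 ×ˢ Set.Icc (0 : ℝ) 1) :
    ∃ l : ℝ × ℝ, Filter.Tendsto (fun m => (V p1 p2)^[m] q) Filter.atTop (nhds l) ∧
      V p1 p2 l = l ∧ l.1 * l.2 = 0 := by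
  have hmaps : MapsTo (V p1 p2) (Icc 0 1 ×ˢ Icc 0 1) (Icc 0 1 ×ˢ Icc 0 1) :=
    fun x hx => (V_mem_Icc_prod_Icc hp1 hp2 hx).1
  obtain ⟨l, hlim⟩ := exists_tendsto_iterate_of_le_self hmaps
    (fun x hx => (V_mem_Icc_prod_Icc hp1 hp2 hx).2) ⟨0, fun x hx => ⟨hx.1.1, hx.2.1⟩⟩ hq
  have hl := (isClosed_Icc.prod isClosed_Icc).mem_of_tendsto hlim
    (Eventually.of_forall fun n => hmaps.iterate n hq)
  have hfix := isFixedPt_of_tendsto_iterate hlim (continuousAt_V hp1 hp2 hl)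
  exact ⟨l, hlim, hfix, V_fixed_fst_mul_snd_eq_zero hp1 hl hfix⟩
end

section
/- For any initial point (x,y,u,v) ∈ S^{2,2}, the sequence W^m(x,y,u,v) = (x^(m),y^(m),u^(m),v^(m)) converges, and lim_{m→∞} x^(m)·v^(m) = 0. -/
/-!
`W p` depends on `p = (x, y, u, v)` only through the ratios `α = x / (x + y)` and
`β = u / (u + v)`, so the orbit of `W` is the image of an orbit of the induced map on `(α, β)`.
That map never increases `α` and never decreases `β`, so the ratios converge to some `(α, β)`,
and hence so does the orbit of `W`. The limit ratios are a fixed point, which forces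
`α (1 - β) = 0`; since `x v = a b α β (1 - α) (1 - β)` along the orbit, `x v → 0`.
-/

open Filter Topology Set Function

section Ordered

variable {K : Type*} [Field K] [LinearOrder K] [IsStrictOrderedRing K]

lemma div_add_mem_Icc {x y : K} (hx : 0 ≤ x) (hy : 0 ≤ y) : x / (x + y) ∈ Icc (0 : K) 1 :=
  ⟨div_nonneg hx (add_nonneg hx hy),
    div_le_one_of_le₀ (le_add_of_nonneg_right hy) (add_nonneg hx hy)⟩

lemma mul_add_one_sub_mul_pos {x y t : K} (hx : 0 < x) (hy : 0 < y) (ht : t ∈ Icc (0 : K) 1) :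
    0 < t * x + (1 - t) * y := by
  obtain ⟨ht0, ht1⟩ := ht
  rcases ht0.lt_or_eq with ht0 | rfl
  · nlinarith [mul_nonneg (sub_nonneg.2 ht1) hy.le]
  · simpa using hy

end Ordered

lemma exists_tendsto_of_antitone_fst_of_monotone_snd {u : ℕ → ℝ × ℝ}
    (h₁ : Antitone (Prod.fst ∘ u)) (h₂ : Monotone (Prod.snd ∘ u))
    (hb₁ : BddBelow (range (Prod.fst ∘ u))) (hb₂ : BddAbove (range (Prod.snd ∘ u))) :
    ∃ l, Tendsto u atTop (𝓝 l) :=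
  ⟨_, (tendsto_atTop_ciInf h₁ hb₁).prodMk_nhds (tendsto_atTop_ciSup h₂ hb₂)⟩

abbrev unitSquare : Set (ℝ × ℝ) := Icc 0 1 ×ˢ Icc 0 1

noncomputable def pairRatios (q : ℝ × ℝ × ℝ × ℝ) : ℝ × ℝ :=
  (q.1 / (q.1 + q.2.1), q.2.2.1 / (q.2.2.1 + q.2.2.2))

def wOfRatios (a b s1 s2 : ℝ) (r : ℝ × ℝ) : ℝ × ℝ × ℝ × ℝ :=
  (a * r.1 * r.2, s1 * r.1 * (1 - r.2) + a * (1 - r.1),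
    s2 * r.1 * (1 - r.2) + b * r.2, b * (1 - r.1) * (1 - r.2))

noncomputable def ratioStep (a b s1 s2 : ℝ) : ℝ × ℝ → ℝ × ℝ :=
  pairRatios ∘ wOfRatios a b s1 s2

lemma pairRatios_mem_unitSquare {q : ℝ × ℝ × ℝ × ℝ} (hq : 0 ≤ q) :
    pairRatios q ∈ unitSquare :=
  ⟨div_add_mem_Icc hq.1 hq.2.1, div_add_mem_Icc hq.2.2.1 hq.2.2.2⟩

lemma continuousAt_pairRatios {q : ℝ × ℝ × ℝ × ℝ} (h₁ : q.1 + q.2.1 ≠ 0)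
    (h₂ : q.2.2.1 + q.2.2.2 ≠ 0) : ContinuousAt pairRatios q := by
  unfold pairRatios
  fun_prop (disch := assumption)

lemma W_eq_wOfRatios_pairRatios (a b s1 s2 : ℝ) {q : ℝ × ℝ × ℝ × ℝ} (h₁ : q.1 + q.2.1 ≠ 0)
    (h₂ : q.2.2.1 + q.2.2.2 ≠ 0) : W a b s1 s2 q = wOfRatios a b s1 s2 (pairRatios q) := by
  obtain ⟨x, y, u, v⟩ := q
  simp only at h₁ h₂
  simp only [W, wOfRatios, pairRatios, Prod.mk.injEq]
  refine ⟨?_, ?_, ?_, ?_⟩ <;> field_simp <;> ring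

lemma add_pos_of_mem_S22 {p : ℝ × ℝ × ℝ × ℝ} (hp : p ∈ S22) :
    0 < p.1 + p.2.1 ∧ 0 < p.2.2.1 + p.2.2.2 := by
  obtain ⟨hx, hy, hu, hv, -, hxy, huv⟩ := hp
  refine ⟨(add_nonneg hx hy).lt_of_ne ?_, (add_nonneg hu hv).lt_of_ne ?_⟩
  · exact fun h => hxy (Prod.ext_iff.2 ((add_eq_zero_iff_of_nonneg hx hy).1 h.symm))
  · exact fun h => huv (Prod.ext_iff.2 ((add_eq_zero_iff_of_nonneg hu hv).1 h.symm))

lemma nonneg_of_mem_S22 {p : ℝ × ℝ × ℝ × ℝ} (hp : p ∈ S22) : 0 ≤ p :=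
  ⟨hp.1, hp.2.1, hp.2.2.1, hp.2.2.2.1⟩

section RatioStep

variable {a b s1 s2 : ℝ} {r : ℝ × ℝ}

lemma continuous_wOfRatios (a b s1 s2 : ℝ) : Continuous (wOfRatios a b s1 s2) := by
  unfold wOfRatios
  fun_prop

lemma wOfRatios_nonneg (ha : 0 ≤ a) (hb : 0 ≤ b) (hs1 : 0 ≤ s1) (hs2 : 0 ≤ s2)
    (hr : r ∈ unitSquare) : 0 ≤ wOfRatios a b s1 s2 r := by
  obtain ⟨⟨h₁, h₁'⟩, ⟨h₂, h₂'⟩⟩ := hr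
  have k₁ : 0 ≤ 1 - r.1 := sub_nonneg.2 h₁'
  have k₂ : 0 ≤ 1 - r.2 := sub_nonneg.2 h₂'
  refine ⟨?_, ?_, ?_, ?_⟩ <;> dsimp only [wOfRatios] <;> positivity

-- Both sums are convex combinations of positive numbers.
lemma wOfRatios_fst_add_pos (ha : 0 < a) (hs1 : 0 < s1) (hr : r ∈ unitSquare) :
    0 < (wOfRatios a b s1 s2 r).1 + (wOfRatios a b s1 s2 r).2.1 :=
  (mul_add_one_sub_mul_pos (mul_add_one_sub_mul_pos ha hs1 hr.2) ha hr.1).trans_eq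
    (by simp only [wOfRatios]; ring)

lemma wOfRatios_snd_add_pos (hb : 0 < b) (hs2 : 0 < s2) (hr : r ∈ unitSquare) :
    0 < (wOfRatios a b s1 s2 r).2.2.1 + (wOfRatios a b s1 s2 r).2.2.2 :=
  (mul_add_one_sub_mul_pos hb (mul_add_one_sub_mul_pos hs2 hb hr.1) hr.2).trans_eq
    (by simp only [wOfRatios]; ring)

lemma mapsTo_ratioStep (ha : 0 ≤ a) (hb : 0 ≤ b) (hs1 : 0 ≤ s1) (hs2 : 0 ≤ s2) :
    MapsTo (ratioStep a b s1 s2) unitSquare unitSquare := fun _ hr =>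
  pairRatios_mem_unitSquare (wOfRatios_nonneg ha hb hs1 hs2 hr)

lemma continuousAt_ratioStep (ha : 0 < a) (hb : 0 < b) (hs1 : 0 < s1) (hs2 : 0 < s2)
    (hr : r ∈ unitSquare) : ContinuousAt (ratioStep a b s1 s2) r :=
  (continuousAt_pairRatios (wOfRatios_fst_add_pos ha hs1 hr).ne'
    (wOfRatios_snd_add_pos hb hs2 hr).ne').comp (continuous_wOfRatios a b s1 s2).continuousAt

lemma ratioStep_fst_mul_eq (ha : 0 < a) (hs1 : 0 < s1) (hr : r ∈ unitSquare) :
    (r.1 - (ratioStep a b s1 s2 r).1) *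
        ((wOfRatios a b s1 s2 r).1 + (wOfRatios a b s1 s2 r).2.1) =
      r.1 * (1 - r.2) * (r.1 * s1 + (1 - r.1) * a) := by
  have h := wOfRatios_fst_add_pos (b := b) (s2 := s2) ha hs1 hr
  simp only [ratioStep, comp_apply, pairRatios] at h ⊢
  rw [sub_mul, div_mul_cancel₀ _ h.ne']
  simp only [wOfRatios]
  ring

lemma ratioStep_fst_le (ha : 0 < a) (hs1 : 0 < s1) (hr : r ∈ unitSquare) :
    (ratioStep a b s1 s2 r).1 ≤ r.1 := by
  have h := ratioStep_fst_mul_eq (b := b) (s2 := s2) ha hs1 hr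
  have hD := wOfRatios_fst_add_pos (b := b) (s2 := s2) ha hs1 hr
  obtain ⟨⟨h₁, h₁'⟩, ⟨-, h₂'⟩⟩ := hr
  have : 0 ≤ r.1 * (1 - r.2) * (r.1 * s1 + (1 - r.1) * a) := by
    have := sub_nonneg.2 h₁'; have := sub_nonneg.2 h₂'; positivity
  exact sub_nonneg.1 (nonneg_of_mul_nonneg_left (h ▸ this) hD)

lemma le_ratioStep_snd (hb : 0 < b) (hs2 : 0 < s2) (hr : r ∈ unitSquare) :
    r.2 ≤ (ratioStep a b s1 s2 r).2 := by
  have hD := wOfRatios_snd_add_pos (a := a) (s1 := s1) hb hs2 hr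
  obtain ⟨⟨h₁, h₁'⟩, ⟨h₂, h₂'⟩⟩ := hr
  simp only [ratioStep, comp_apply, pairRatios] at hD ⊢
  rw [le_div_iff₀ hD]
  have k₁ := sub_nonneg.2 h₁'
  have k₂ := sub_nonneg.2 h₂'
  have : 0 ≤ (1 - r.2) * (s2 * r.1 * (1 - r.2) + b * r.1 * r.2) := by positivity
  simp only [wOfRatios]
  linarith

lemma fst_mul_one_sub_snd_eq_zero_of_isFixedPt (ha : 0 < a) (hs1 : 0 < s1)
    (hr : r ∈ unitSquare) (hfix : IsFixedPt (ratioStep a b s1 s2) r) :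
    r.1 * (1 - r.2) = 0 := by
  have h := ratioStep_fst_mul_eq (b := b) (s2 := s2) ha hs1 hr
  rw [hfix, sub_self, zero_mul] at h
  exact (mul_eq_zero.1 h.symm).resolve_right (mul_add_one_sub_mul_pos hs1 ha hr.1).ne'

lemma exists_tendsto_iterate_ratioStep (ha : 0 < a) (hb : 0 < b) (hs1 : 0 < s1)
    (hs2 : 0 < s2) (hr : r ∈ unitSquare) :
    ∃ l ∈ unitSquare, Tendsto (fun n => (ratioStep a b s1 s2)^[n] r) atTop (𝓝 l) := by
  have hmem n : (ratioStep a b s1 s2)^[n] r ∈ unitSquare :=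
    (mapsTo_ratioStep ha.le hb.le hs1.le hs2.le).iterate n hr
  obtain ⟨l, hl⟩ := exists_tendsto_of_antitone_fst_of_monotone_snd
    (antitone_nat_of_succ_le fun n => by
      simpa only [comp_apply, iterate_succ_apply'] using
        ratioStep_fst_le ha hs1 (hmem n))
    (monotone_nat_of_le_succ fun n => by
      simpa only [comp_apply, iterate_succ_apply'] using
        le_ratioStep_snd hb hs2 (hmem n))
    ⟨0, forall_mem_range.2 fun n => (hmem n).1.1⟩
    ⟨1, forall_mem_range.2 fun n => (hmem n).2.2⟩
  exact ⟨l, (isClosed_Icc.prod isClosed_Icc).mem_of_tendsto hl (.of_forall hmem), hl⟩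

lemma iterate_W_succ (ha : 0 < a) (hb : 0 < b) (hs1 : 0 < s1) (hs2 : 0 < s2)
    {p : ℝ × ℝ × ℝ × ℝ} (hp : p ∈ S22) (n : ℕ) :
    (W a b s1 s2)^[n + 1] p = wOfRatios a b s1 s2 ((ratioStep a b s1 s2)^[n] (pairRatios p)) := by
  induction n with
  | zero =>
    exact W_eq_wOfRatios_pairRatios a b s1 s2 (add_pos_of_mem_S22 hp).1.ne'
      (add_pos_of_mem_S22 hp).2.ne'
  | succ n ih =>
    have hmem := (mapsTo_ratioStep ha.le hb.le hs1.le hs2.le).iterate n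
      (pairRatios_mem_unitSquare (nonneg_of_mem_S22 hp))
    rw [iterate_succ_apply', ih, W_eq_wOfRatios_pairRatios a b s1 s2
      (wOfRatios_fst_add_pos ha hs1 hmem).ne' (wOfRatios_snd_add_pos hb hs2 hmem).ne',
      iterate_succ_apply']
    rfl

end RatioStep

theorem stmt12_general (a b s1 s2 : ℝ) (ha : 0 < a) (hb : 0 < b) (hs1 : 0 < s1) (hs2 : 0 < s2)
    (p : ℝ × ℝ × ℝ × ℝ) (hp : p ∈ S22) :
    (∃ l : ℝ × ℝ × ℝ × ℝ,
      Filter.Tendsto (fun m => (W a b s1 s2)^[m] p) Filter.atTop (nhds l)) ∧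
    Filter.Tendsto (fun m => ((W a b s1 s2)^[m] p).1 * ((W a b s1 s2)^[m] p).2.2.2)
      Filter.atTop (nhds 0) := by
  obtain ⟨l, hl, hlim⟩ := exists_tendsto_iterate_ratioStep ha hb hs1 hs2
    (pairRatios_mem_unitSquare (nonneg_of_mem_S22 hp))
  have hfix : l.1 * (1 - l.2) = 0 := fst_mul_one_sub_snd_eq_zero_of_isFixedPt ha hs1 hl
    (isFixedPt_of_tendsto_iterate hlim (continuousAt_ratioStep ha hb hs1 hs2 hl))
  have hW : Tendsto (fun n => (W a b s1 s2)^[n + 1] p) atTop (𝓝 (wOfRatios a b s1 s2 l)) := by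
    simp only [iterate_W_succ ha hb hs1 hs2 hp]
    exact ((continuous_wOfRatios a b s1 s2).tendsto l).comp hlim
  have hxv : (wOfRatios a b s1 s2 l).1 * (wOfRatios a b s1 s2 l).2.2.2 = 0 := by
    simp only [wOfRatios]
    linear_combination (a * b * l.2 * (1 - l.1)) * hfix
  refine ⟨⟨_, (tendsto_add_atTop_iff_nat 1).1 hW⟩, (tendsto_add_atTop_iff_nat 1).1 ?_⟩
  simpa only [hxv] using hW.fst_nhds.mul hW.snd_nhds.snd_nhds.snd_nhds

theorem stmt12 (a b s1 s2 : ℝ) (ha : 0 < a) (hb : 0 < b) (hs1 : 0 < s1) (hs2 : 0 < s2)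
    (hab : a + b = 1) (hs : s1 + s2 = 1)
    (p : ℝ × ℝ × ℝ × ℝ) (hp : p ∈ S22) :
    (∃ l : ℝ × ℝ × ℝ × ℝ,
      Filter.Tendsto (fun m => (W a b s1 s2)^[m] p) Filter.atTop (nhds l)) ∧
    Filter.Tendsto (fun m => ((W a b s1 s2)^[m] p).1 * ((W a b s1 s2)^[m] p).2.2.2)
      Filter.atTop (nhds 0) :=
  stmt12_general a b s1 s2 ha hb hs1 hs2 p hp
end

section
/- If f ∈ C^∞[0,1] is analytic with f(α) = Σ c_k α^k, is not identically zero, and satisfies f(α)(α - f(α))(1-α) = α(f(α) - f(f(α))) for all α ∈ [0,1] (with f mapping [0,1] into itself so f∘f is defined), then f(α) = α or f(α) = θα - α² for some constant θ. -/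
/-!
Write `f α = α * U α`, where `U` is the power series with coefficients `c (k + 1)`; it is analytic
at `0` and `θ = U 0 ≥ 0` because `f ≥ 0`. Dividing the equation by `α² U α` gives
`U (α U α) = 1 - (1 - α) (1 - U α)` to the right of `0`, hence near `0` by the identity theorem.
Then `V = θ - α - U` and `S = 1 - U` satisfy `h (α U α) = λ α * h α` with `λ = 1` and `λ = 1 - α`.
If `h = α ^ m * g` with `g 0 ≠ 0`, comparing the first two Taylor coefficients of
`U ^ m * g (α U α) = λ * g` gives `θ ^ m = λ 0` and, when `θ = 1`, `m * U' 0 = λ' 0`.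
Unless `V ≡ 0`, this forces `θ = 1` and `U' 0 = 0` (from `V`), and then `S ≡ 0`, since otherwise
`m * U' 0 = -1`. So `U` is `θ - α` or `1` near `0`, and uniqueness of power series coefficients
carries this over to all of `[0, 1]`.
-/

open Filter Topology Set Polynomial FormalMultilinearSeries

section FunctionalEquation

variable {𝕜 : Type*} [NontriviallyNormedField 𝕜] {h u l g : 𝕜 → 𝕜} {m : ℕ}

theorem AnalyticAt.exists_pow_mul_comp_mul_eq (hh : AnalyticAt 𝕜 h 0)
    (hm : analyticOrderAt h 0 = m) (hu : AnalyticAt 𝕜 u 0) (hl : AnalyticAt 𝕜 l 0)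
    (H : ∀ᶠ x in 𝓝 0, h (x * u x) = l x * h x) :
    ∃ g : 𝕜 → 𝕜, AnalyticAt 𝕜 g 0 ∧ g 0 ≠ 0 ∧
      ∀ᶠ x in 𝓝 0, u x ^ m * g (x * u x) = l x * g x := by
  obtain ⟨g, hg, hg0, hhg⟩ := hh.analyticOrderAt_eq_natCast.mp hm
  simp only [sub_zero, smul_eq_mul] at hhg
  have hΦ : Tendsto (fun x => x * u x) (𝓝 0) (𝓝 0) := by
    simpa using (continuousAt_id.fun_mul hu.continuousAt).tendsto
  have hgΦ : AnalyticAt 𝕜 (fun x => g (x * u x)) 0 :=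
    hg.comp_of_eq (analyticAt_id.fun_mul hu) (zero_mul _)
  refine ⟨g, hg, hg0, ((hu.pow m).mul hgΦ).frequently_eq_iff_eventually_eq (hl.mul hg) |>.mp ?_⟩
  refine Eventually.frequently ?_
  filter_upwards [self_mem_nhdsWithin,
    (H.and (hhg.and (hΦ.eventually hhg))).filter_mono nhdsWithin_le_nhds]
    with x (hx : x ≠ 0) ⟨hH, hx1, hx2⟩
  refine mul_left_cancel₀ (pow_ne_zero m hx) ?_
  calc x ^ m * (u x ^ m * g (x * u x)) = h (x * u x) := by rw [hx2]; ring
    _ = l x * h x := hH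
    _ = x ^ m * (l x * g x) := by rw [hx1]; ring

theorem pow_eq_of_eventually_pow_mul_comp_mul_eq (hg0 : g 0 ≠ 0)
    (H : ∀ᶠ x in 𝓝 0, u x ^ m * g (x * u x) = l x * g x) : u 0 ^ m = l 0 := by
  have h0 := H.self_of_nhds
  rw [zero_mul] at h0
  exact mul_right_cancel₀ hg0 h0

theorem natCast_mul_deriv_eq_of_eventually_pow_mul_comp_mul_eq (hg : DifferentiableAt 𝕜 g 0)
    (hg0 : g 0 ≠ 0) (hu : DifferentiableAt 𝕜 u 0) (hl : DifferentiableAt 𝕜 l 0) (hu0 : u 0 = 1)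
    (H : ∀ᶠ x in 𝓝 0, u x ^ m * g (x * u x) = l x * g x) : m * deriv u 0 = deriv l 0 := by
  have hl0 : l 0 = 1 := by rw [← pow_eq_of_eventually_pow_mul_comp_mul_eq hg0 H, hu0, one_pow]
  have hΦ : HasDerivAt (fun x => x * u x) 1 0 := by
    simpa [hu0] using (hasDerivAt_id' (0 : 𝕜)).fun_mul hu.hasDerivAt
  have hgΦ : HasDerivAt (fun x => g (x * u x)) (deriv g 0) 0 := by
    simpa [Function.comp_def] using HasDerivAt.comp_of_eq 0 hg.hasDerivAt hΦ (zero_mul _).symm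
  have hderiv := ((hu.hasDerivAt.fun_pow m).fun_mul hgΦ).unique
    ((hl.hasDerivAt.fun_mul hg.hasDerivAt).congr_of_eventuallyEq H)
  simp only [hu0, hl0, one_pow, mul_one, one_mul] at hderiv
  exact mul_right_cancel₀ hg0 (add_right_cancel hderiv)

end FunctionalEquation

theorem eventuallyEq_sub_or_one_of_comp_mul_eq {U : ℝ → ℝ} (hU : AnalyticAt ℝ U 0) (hU0 : 0 ≤ U 0)
    (H : ∀ᶠ x in 𝓝 0, U (x * U x) = 1 - (1 - x) * (1 - U x)) :
    (U =ᶠ[𝓝 0] fun x => U 0 - x) ∨ U =ᶠ[𝓝 0] fun _ => 1 := by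
  set V : ℝ → ℝ := fun x => U 0 - x - U x
  have hV : AnalyticAt ℝ V 0 := (analyticAt_const.sub analyticAt_id).sub hU
  have hVinv : ∀ᶠ x in 𝓝 0, V (x * U x) = (fun _ => 1) x * V x :=
    H.mono fun x hx => by simp only [V, hx]; ring
  cases hVm : analyticOrderAt V 0 using ENat.recTopCoe with
  | top =>
    left
    filter_upwards [analyticOrderAt_eq_top.mp hVm] with x hx
    simp only [V] at hx
    linarith
  | coe m =>
    obtain ⟨g, hg, hg0, hVg⟩ := hV.exists_pow_mul_comp_mul_eq hVm hU analyticAt_const hVinv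
    have hm : m ≠ 0 := by
      rintro rfl
      exact hV.analyticOrderAt_ne_zero.mpr (by simp [V]) (by simpa using hVm)
    have hθ : U 0 = 1 := (pow_eq_one_iff_of_nonneg hU0 hm).mp
      (pow_eq_of_eventually_pow_mul_comp_mul_eq hg0 hVg)
    have hU' : deriv U 0 = 0 := by
      have := natCast_mul_deriv_eq_of_eventually_pow_mul_comp_mul_eq hg.differentiableAt hg0
        hU.differentiableAt (differentiableAt_const _) hθ hVg
      simpa [hm] using this
    right
    set S : ℝ → ℝ := fun x => 1 - U x
    have hS : AnalyticAt ℝ S 0 := analyticAt_const.sub hU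
    have hSinv : ∀ᶠ x in 𝓝 0, S (x * U x) = (fun x => 1 - x) x * S x :=
      H.mono fun x hx => by simp only [S, hx]; ring
    cases hSn : analyticOrderAt S 0 using ENat.recTopCoe with
    | top =>
      filter_upwards [analyticOrderAt_eq_top.mp hSn] with x hx
      simp only [S] at hx
      linarith
    | coe n =>
      obtain ⟨k, hk, hk0, hSk⟩ :=
        hS.exists_pow_mul_comp_mul_eq hSn hU (analyticAt_const.sub analyticAt_id) hSinv
      have := natCast_mul_deriv_eq_of_eventually_pow_mul_comp_mul_eq hk.differentiableAt hk0
        hU.differentiableAt ((differentiableAt_const _).sub differentiableAt_id) hθ hSk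
      simp [hU'] at this

section ScalarPowerSeries

variable {d e : ℕ → ℝ}

theorem FormalMultilinearSeries.one_le_radius_ofScalars (hd : Summable d) :
    1 ≤ (ofScalars ℝ d).radius :=
  le_radius_of_summable_norm _ (by simpa using hd.abs)

theorem FormalMultilinearSeries.hasFPowerSeriesOnBall_ofScalarsSum (hd : Summable d) :
    HasFPowerSeriesOnBall (ofScalarsSum d) (ofScalars ℝ d) 0 (ofScalars ℝ d).radius :=
  (ofScalars ℝ d).hasFPowerSeriesOnBall (zero_lt_one.trans_le (one_le_radius_ofScalars hd))

theorem FormalMultilinearSeries.hasSum_ofScalarsSum (hd : Summable d) {x : ℝ} (hx : |x| ≤ 1) :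
    HasSum (fun k => d k * x ^ k) (ofScalarsSum d x) := by
  have hs : Summable (fun k => d k * x ^ k) := by
    refine Summable.of_norm_bounded hd.abs fun k => ?_
    rw [norm_mul, norm_pow, Real.norm_eq_abs, Real.norm_eq_abs]
    exact mul_le_of_le_one_right (abs_nonneg _) (pow_le_one₀ (abs_nonneg _) hx)
  simpa [ofScalars_sum_eq] using hs.hasSum

theorem FormalMultilinearSeries.ofScalarsSum_eq_mul_ofScalarsSum_succ (hd : Summable d)
    (hd0 : d 0 = 0) {x : ℝ} (hx : |x| ≤ 1) :
    ofScalarsSum d x = x * ofScalarsSum (fun k => d (k + 1)) x := by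
  have hd' : Summable (fun k => d (k + 1)) := (summable_nat_add_iff 1).mpr hd
  refine (hasSum_ofScalarsSum hd hx).unique ?_
  rw [← hasSum_nat_add_iff' 1, Finset.sum_range_one, hd0, zero_mul, sub_zero]
  simpa only [mul_left_comm x, ← pow_succ'] using (hasSum_ofScalarsSum hd' hx).mul_left x

theorem FormalMultilinearSeries.eq_of_ofScalarsSum_eventuallyEq (hd : Summable d)
    (he : Summable e) (h : ofScalarsSum (E := ℝ) d =ᶠ[𝓝 0] ofScalarsSum e) : d = e := by
  have hs := (hasFPowerSeriesOnBall_ofScalarsSum hd).hasFPowerSeriesAt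
    |>.eq_formalMultilinearSeries_of_eventually
      (hasFPowerSeriesOnBall_ofScalarsSum he).hasFPowerSeriesAt h
  funext k
  simpa using congrArg (fun p : FormalMultilinearSeries ℝ ℝ ℝ => p k fun _ => 1) hs

end ScalarPowerSeries

theorem Polynomial.summable_coeff (p : ℝ[X]) : Summable p.coeff :=
  summable_of_ne_finset_zero (s := p.support) fun _ hk => notMem_support_iff.mp hk

theorem Polynomial.ofScalarsSum_coeff (p : ℝ[X]) (x : ℝ) : ofScalarsSum p.coeff x = p.eval x := by
  rw [ofScalars_sum_eq, eval_eq_sum, sum_def, tsum_eq_sum (s := p.support)]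
  · simp
  · exact fun k hk => by simp [notMem_support_iff.mp hk]

theorem ofScalarsSum_eq_mul_eval_of_eventuallyEq {c : ℕ → ℝ} (hc : Summable c) (hc0 : c 0 = 0)
    (p : ℝ[X]) (hp : ofScalarsSum (E := ℝ) (fun k => c (k + 1)) =ᶠ[𝓝 0] fun x => p.eval x)
    {x : ℝ} (hx : |x| ≤ 1) : ofScalarsSum c x = x * p.eval x := by
  have hcoeff : (fun k => c (k + 1)) = p.coeff :=
    eq_of_ofScalarsSum_eventuallyEq ((summable_nat_add_iff 1).mpr hc) p.summable_coeff
      (by simpa only [← ofScalarsSum_coeff] using hp)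
  rw [ofScalarsSum_eq_mul_ofScalarsSum_succ hc hc0 hx, hcoeff, ofScalarsSum_coeff]


theorem summable_and_eqOn_ofScalarsSum {f : ℝ → ℝ} {c : ℕ → ℝ}
    (hsum : ∀ α ∈ Icc (0 : ℝ) 1, HasSum (fun k => c k * α ^ k) (f α)) :
    Summable c ∧ ∀ α ∈ Icc (0 : ℝ) 1, f α = ofScalarsSum c α := by
  have hc : Summable c := by simpa using (hsum 1 (right_mem_Icc.mpr zero_le_one)).summable
  exact ⟨hc, fun α hα => (hsum α hα).unique
    (hasSum_ofScalarsSum hc (abs_le.mpr ⟨by linarith [hα.1], hα.2⟩))⟩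

section FunctionalEquationOnUnitInterval

variable {f U : ℝ → ℝ}

theorem nonneg_apply_zero_of_mapsTo (hU : ContinuousAt U 0) (hmaps : MapsTo f (Icc 0 1) (Icc 0 1))
    (hfU : ∀ α ∈ Icc (0 : ℝ) 1, f α = α * U α) : 0 ≤ U 0 := by
  refine ge_of_tendsto (hU.tendsto.mono_left nhdsWithin_le_nhds : Tendsto U (𝓝[>] 0) _) ?_
  filter_upwards [Ioo_mem_nhdsGT zero_lt_one] with x hx
  have hfx := (hmaps (Ioo_subset_Icc_self hx)).1
  rw [hfU x (Ioo_subset_Icc_self hx)] at hfx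
  exact nonneg_of_mul_nonneg_right hfx hx.1

theorem eventually_comp_mul_eq_of_functional_eq (hU : AnalyticAt ℝ U 0)
    (hUne : ∀ᶠ x in 𝓝[≠] 0, U x ≠ 0) (hmaps : MapsTo f (Icc 0 1) (Icc 0 1))
    (hfU : ∀ α ∈ Icc (0 : ℝ) 1, f α = α * U α)
    (heq : ∀ α ∈ Icc (0 : ℝ) 1, f α * (α - f α) * (1 - α) = α * (f α - f (f α))) :
    ∀ᶠ x in 𝓝 0, U (x * U x) = 1 - (1 - x) * (1 - U x) := by
  have hUΦ : AnalyticAt ℝ (fun x => U (x * U x)) 0 :=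
    hU.comp_of_eq (analyticAt_id.fun_mul hU) (zero_mul _)
  have hR : AnalyticAt ℝ (fun x => 1 - (1 - x) * (1 - U x)) 0 := by fun_prop
  refine (hUΦ.frequently_eq_iff_eventually_eq hR).mp ?_
  refine (Eventually.frequently ?_).filter_mono (nhdsGT_le_nhdsNE 0)
  filter_upwards [Ioo_mem_nhdsGT zero_lt_one, hUne.filter_mono (nhdsGT_le_nhdsNE 0)] with x hx hUx
  have h := heq x (Ioo_subset_Icc_self hx)
  rw [hfU (f x) (hmaps (Ioo_subset_Icc_self hx)), hfU x (Ioo_subset_Icc_self hx)] at h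
  refine mul_left_cancel₀ (mul_ne_zero (pow_ne_zero 2 hx.1.ne') hUx) ?_
  linear_combination h

end FunctionalEquationOnUnitInterval

theorem stmt15 (f : ℝ → ℝ) (c : ℕ → ℝ)
    (hsum : ∀ α ∈ Set.Icc (0 : ℝ) 1, HasSum (fun k => c k * α ^ k) (f α))
    (hmaps : Set.MapsTo f (Set.Icc (0 : ℝ) 1) (Set.Icc (0 : ℝ) 1))
    (hne : ∃ α ∈ Set.Icc (0 : ℝ) 1, f α ≠ 0)
    (heq : ∀ α ∈ Set.Icc (0 : ℝ) 1,
      f α * (α - f α) * (1 - α) = α * (f α - f (f α))) :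
    (∀ α ∈ Set.Icc (0 : ℝ) 1, f α = α) ∨
    ∃ θ : ℝ, ∀ α ∈ Set.Icc (0 : ℝ) 1, f α = θ * α - α ^ 2 := by
  obtain ⟨hc, hf⟩ := summable_and_eqOn_ofScalarsSum hsum
  have habs : ∀ α ∈ Icc (0 : ℝ) 1, |α| ≤ 1 := fun α hα => abs_le.mpr ⟨by linarith [hα.1], hα.2⟩
  have hc0 : c 0 = 0 := by
    have h0 := heq 0 (left_mem_Icc.mpr zero_le_one)
    rw [hf 0 (left_mem_Icc.mpr zero_le_one)] at h0
    simpa using h0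
  set U := ofScalarsSum (E := ℝ) fun k => c (k + 1)
  have hfU : ∀ α ∈ Icc (0 : ℝ) 1, f α = α * U α := fun α hα =>
    (hf α hα).trans (ofScalarsSum_eq_mul_ofScalarsSum_succ hc hc0 (habs α hα))
  have hpoly : ∀ p : ℝ[X], U =ᶠ[𝓝 0] (fun x => p.eval x) → ∀ α ∈ Icc (0 : ℝ) 1,
      f α = α * p.eval α := fun p hp α hα =>
    (hf α hα).trans (ofScalarsSum_eq_mul_eval_of_eventuallyEq hc hc0 p hp (habs α hα))
  have hU : AnalyticAt ℝ U 0 :=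
    (hasFPowerSeriesOnBall_ofScalarsSum ((summable_nat_add_iff 1).mpr hc)).analyticAt
  have hUne : ∀ᶠ x in 𝓝[≠] 0, U x ≠ 0 := by
    refine hU.eventually_eq_zero_or_eventually_ne_zero.resolve_left fun hU0 => ?_
    obtain ⟨α, hα, hfα⟩ := hne
    exact hfα (by simpa using hpoly 0 (by simpa [EventuallyEq] using hU0) α hα)
  rcases eventuallyEq_sub_or_one_of_comp_mul_eq hU
    (nonneg_apply_zero_of_mapsTo hU.continuousAt hmaps hfU)
    (eventually_comp_mul_eq_of_functional_eq hU hUne hmaps hfU heq) with hθ | h1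
  · refine Or.inr ⟨U 0, fun α hα => ?_⟩
    rw [hpoly (C (U 0) - X) (by simpa using hθ) α hα, eval_sub, eval_C, eval_X]
    ring
  · exact Or.inl fun α hα => by simpa using hpoly 1 (by simpa using h1) α hα
end

section
/- Fix θ ∈ (1,2]. For any initial point (α,β) on the invariant line γ_θ = {(α,β) ∈ [0,1]² : β = α + 1 - θ}, the iterates V1^m(α,β) converge to (θ-1, 0). -/
/-! The difference `α - β` is invariant under `V1`, so on `γ_θ` the second coordinate follows
the one-dimensional recurrence `β ↦ β (2 - θ - β)`. Starting in `[0, 2 - θ]` it stays there and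
shrinks by a factor at most `2 - θ < 1` per step, hence tends to `0`, and then `α = β + θ - 1`
tends to `θ - 1`. -/

def V1 (q : ℝ × ℝ) : ℝ × ℝ := (q.1 * (1 - q.2), q.2 * (1 - q.1))

open Filter Topology

lemma tendsto_zero_of_succ_eq_mul_sub {c : ℝ} (hc : c < 1) {b : ℕ → ℝ}
    (hb : ∀ n, b (n + 1) = b n * (c - b n)) (h0 : 0 ≤ b 0) (h0c : b 0 ≤ c) :
    Tendsto b atTop (𝓝 0) := by
  have hc0 : 0 ≤ c := h0.trans h0c
  have bound : ∀ n, 0 ≤ b n ∧ b n ≤ c ^ n * b 0 := by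
    intro n
    induction n with
    | zero => simpa using h0
    | succ n ih =>
      obtain ⟨hnonneg, hle⟩ := ih
      have hle_c : b n ≤ c :=
        hle.trans ((mul_le_of_le_one_left h0 (pow_le_one₀ hc0 hc.le)).trans h0c)
      rw [hb, pow_succ]
      constructor
      · exact mul_nonneg hnonneg (by linarith)
      · calc b n * (c - b n) ≤ b n * c := by nlinarith
          _ ≤ c ^ n * b 0 * c := mul_le_mul_of_nonneg_right hle hc0
          _ = c ^ n * c * b 0 := by ring
  have hgeom : Tendsto (fun n => c ^ n * b 0) atTop (𝓝 0) := by
    simpa using (tendsto_pow_atTop_nhds_zero_of_lt_one hc0 hc).mul_const (b 0)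
  exact squeeze_zero (fun n => (bound n).1) (fun n => (bound n).2) hgeom

lemma V1_fst_sub_snd (q : ℝ × ℝ) : (V1 q).1 - (V1 q).2 = q.1 - q.2 := by
  simp only [V1]; ring

lemma iterate_V1_fst_sub_snd (q : ℝ × ℝ) (m : ℕ) :
    (V1^[m] q).1 - (V1^[m] q).2 = q.1 - q.2 := by
  induction m with
  | zero => rfl
  | succ m ih => rw [Function.iterate_succ_apply', V1_fst_sub_snd, ih]

lemma V1_snd_of_fst_sub_snd {q : ℝ × ℝ} {d : ℝ} (h : q.1 - q.2 = d) :
    (V1 q).2 = q.2 * (1 - d - q.2) := by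
  simp only [V1, show q.1 = q.2 + d by linarith]; ring

theorem stmt16 (θ : ℝ) (hθ : θ ∈ Set.Ioc (1 : ℝ) 2)
    (q : ℝ × ℝ) (hq : q ∈ Set.Icc (0 : ℝ) 1 ×ˢ Set.Icc (0 : ℝ) 1)
    (hline : q.2 = q.1 + 1 - θ) :
    Filter.Tendsto (fun m => V1^[m] q) Filter.atTop (nhds (θ - 1, 0)) := by
  obtain ⟨hθ1, -⟩ := hθ
  obtain ⟨⟨-, hα1⟩, hβ0, -⟩ := hq
  have hdiff : ∀ m, (V1^[m] q).1 - (V1^[m] q).2 = θ - 1 := fun m => by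
    rw [iterate_V1_fst_sub_snd]; linarith
  have hsnd : Tendsto (fun m => (V1^[m] q).2) atTop (𝓝 0) := by
    refine tendsto_zero_of_succ_eq_mul_sub (c := 2 - θ) (by linarith) (fun n => ?_) hβ0
      (by simp only [Function.iterate_zero, id]; linarith)
    rw [Function.iterate_succ_apply', V1_snd_of_fst_sub_snd (hdiff n)]; ring
  have hfst : Tendsto (fun m => (V1^[m] q).1) atTop (𝓝 (θ - 1)) := by
    simpa [show ∀ m, (V1^[m] q).1 = (V1^[m] q).2 + (θ - 1) from fun m => by linarith [hdiff m]]
      using hsnd.add_const (θ - 1)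
  exact hfst.prodMk_nhds hsnd
end
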